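/- arXiv:1602.01991 — 4 statements merged into one kernel-verified Lean document; each statement's English description precedes it below -/
import Mathlib

section
/- Let n > 0 be real and m ∈ ℂ with |m|² ≤ n(n+1). Define the 1×2 complex matrices U = [√(n+1−|m|²/n), m/√n] and V = [0, √n]. Then U U* = 1 + V V* and U V^⊤ = V U^⊤ (so (U, V) satisfies the single-mode Bogoliubov conditions), and moreover V^# V^⊤ = n and U V^⊤ = m; that is, applying this Bogoliubov transformation to two vacuum modes produces a single mode with covariance data N = n and M = m. -/
/-!
All four identities are between `1 × 1` matrices, hence scalar identities. For row vectors
`U Vᵀ = V Uᵀ` always holds, being a `1 × 1` matrix and its transpose. The normalisation reads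
`|U₀₀|² + |U₀₁|² = (n + 1 - |m|²/n) + |m|²/n = 1 + n = 1 + |V₀₁|²`, where `|m|² ≤ n (n + 1)` is
exactly what makes the radicand `n + 1 - |m|²/n` nonnegative, and `U₀₁ V₀₁ = (m/√n) √n = m`.
-/

open scoped Matrix ComplexConjugate

namespace Matrix

theorem ext_fin_one {α : Type*} {A B : Matrix (Fin 1) (Fin 1) α} (h : A 0 0 = B 0 0) : A = B :=
  ext fun i j => by rwa [Subsingleton.elim i 0, Subsingleton.elim j 0]

theorem mul_transpose_comm_of_fin_one {α n : Type*} [CommSemiring α] [Fintype n]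
    (u v : Matrix (Fin 1) n α) : u * vᵀ = v * uᵀ :=
  ext_fin_one (by simp [mul_apply, mul_comm])

theorem row_two_mul_transpose_apply {α : Type*} [CommSemiring α] (a b c d : α) :
    (!![a, b] * !![c, d]ᵀ) 0 0 = a * c + b * d := by
  simp [mul_apply, Fin.sum_univ_two]

variable {𝕜 : Type*} [RCLike 𝕜]

theorem row_two_mul_conjTranspose_self_apply (a b : 𝕜) :
    (!![a, b] * !![a, b]ᴴ) 0 0 = ((‖a‖ ^ 2 + ‖b‖ ^ 2 : ℝ) : 𝕜) := by
  simp [mul_apply, Fin.sum_univ_two, RCLike.mul_conj]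

theorem row_two_map_conj_mul_transpose_self_apply (a b : 𝕜) :
    (!![a, b].map conj * !![a, b]ᵀ) 0 0 = ((‖a‖ ^ 2 + ‖b‖ ^ 2 : ℝ) : 𝕜) := by
  simp [mul_apply, Fin.sum_univ_two, RCLike.conj_mul]

end Matrix

theorem Complex.norm_ofReal_sqrt_sq {x : ℝ} (hx : 0 ≤ x) : ‖(Real.sqrt x : ℂ)‖ ^ 2 = x := by
  simp [Real.sq_sqrt hx]

theorem Complex.norm_div_ofReal_sqrt_sq (m : ℂ) {x : ℝ} (hx : 0 ≤ x) :
    ‖m / (Real.sqrt x : ℂ)‖ ^ 2 = ‖m‖ ^ 2 / x := by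
  rw [norm_div, div_pow, norm_ofReal_sqrt_sq hx]

/-- **A single Gaussian mode with covariance data `(n, m)` from two vacuum modes.**
For `n > 0` and `m : ℂ` with `|m|² ≤ n (n + 1)`, the `1 × 2` matrices
`U = [√(n + 1 − |m|²/n), m/√n]` and `V = [0, √n]` satisfy the Bogoliubov conditions
`U Uᴴ = 1 + V Vᴴ` and `U Vᵀ = V Uᵀ`, and produce the covariance data
`N = (V^# Vᵀ)₀₀ = n` and `M = (U Vᵀ)₀₀ = m`. -/
theorem single_mode_from_two_vacuum_modes (n : ℝ) (hn : 0 < n) (m : ℂ)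
    (hm : ‖m‖ ^ 2 ≤ n * (n + 1))
    (U V : Matrix (Fin 1) (Fin 2) ℂ)
    (hU : U = !![(Real.sqrt (n + 1 - ‖m‖ ^ 2 / n) : ℂ), m / (Real.sqrt n : ℂ)])
    (hV : V = !![0, (Real.sqrt n : ℂ)]) :
    U * Uᴴ = 1 + V * Vᴴ ∧ U * Vᵀ = V * Uᵀ ∧
    (V.map (starRingEnd ℂ) * Vᵀ) 0 0 = (n : ℂ) ∧
    (U * Vᵀ) 0 0 = m := by
  have hradicand : 0 ≤ n + 1 - ‖m‖ ^ 2 / n := by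
    rw [sub_nonneg, div_le_iff₀ hn]
    linarith
  have hsqrt : (Real.sqrt n : ℂ) ≠ 0 := by exact_mod_cast (Real.sqrt_pos.mpr hn).ne'
  subst hU hV
  refine ⟨Matrix.ext_fin_one ?_, Matrix.mul_transpose_comm_of_fin_one _ _, ?_, ?_⟩
  · rw [Matrix.add_apply, Matrix.one_apply_eq, Matrix.row_two_mul_conjTranspose_self_apply,
      Matrix.row_two_mul_conjTranspose_self_apply, Complex.norm_ofReal_sqrt_sq hradicand,
      Complex.norm_div_ofReal_sqrt_sq m hn.le, Complex.norm_ofReal_sqrt_sq hn.le, norm_zero]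
    push_cast
    ring
  · rw [Matrix.row_two_map_conj_mul_transpose_self_apply, Complex.norm_ofReal_sqrt_sq hn.le]
    simp
  · rw [Matrix.row_two_mul_transpose_apply, mul_zero, zero_add, div_mul_cancel₀ m hsqrt]
end

section
/- Let L_1, …, L_d be bounded operators and H a bounded self-adjoint operator on a complex Hilbert space, let n be a d×d complex matrix, and let m be a symmetric d×d complex matrix (m_{ij} = m_{ji}). Define, for any bounded operator X, 𝓛X = (1/2) Σ_k L_k*[X, L_k] + (1/2) Σ_k [L_k*, X] L_k − i[X, H] and 𝓛^{(N,M)}X = (1/2) Σ_{i,j} (δ_{ij} + n_{ji}) { L_i*[X, L_j] + [L_i*, X] L_j } + (1/2) Σ_{i,j} n_{ij} { L_i[X, L_j*] + [L_i, X] L_j* } − (1/2) Σ_{i,j} m_{ij} { L_i*[X, L_j*] + [L_i*, X] L_j* } − (1/2) Σ_{i,j} conj(m_{ji}) { L_i[X, L_j] + [L_i, X] L_j } − i[X, H]. Then for every bounded operator X: 𝓛^{(N,M)}X = 𝓛X + (1/2) Σ_{i,j} n_{ji} ( [L_i*, [X, L_j]] + [[L_i*, X], L_j] ) + (1/2) Σ_{i,j}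 m_{ij} [L_j*, [L_i*, X]] + (1/2) Σ_{i,j} conj(m_{ij}) [[X, L_i], L_j]. -/
/-!
Both generators are sums of "sandwich" terms `a * ⁅X, b⁆ + ⁅a, X⁆ * b`. The `δ_{ij}` part of
`𝓛^{(N,M)}` is exactly the vacuum generator. The two `n`-sums pair up, after exchanging the
summation indices in the second, into `a * ⁅X, b⁆ + ⁅a, X⁆ * b + b * ⁅X, a⁆ + ⁅b, X⁆ * a`, which is
the double-commutator `⁅a, ⁅X, b⁆⁆ + ⁅⁅a, X⁆, b⁆`. In the `m`-sums the coefficients are symmetric,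
so the first half of each sandwich may be re-indexed, and `b * ⁅X, a⁆ + ⁅a, X⁆ * b = -⁅b, ⁅a, X⁆⁆`.
-/

open Finset

section Sandwich

variable {A : Type*} [Ring A]

theorem mul_lie_add_lie_mul_add_swap (a b x : A) :
    a * ⁅x, b⁆ + ⁅a, x⁆ * b + (b * ⁅x, a⁆ + ⁅b, x⁆ * a) = ⁅a, ⁅x, b⁆⁆ + ⁅⁅a, x⁆, b⁆ := by
  simp only [Ring.lie_def]
  noncomm_ring

theorem mul_lie_swap_add_lie_mul (a b x : A) : b * ⁅x, a⁆ + ⁅a, x⁆ * b = -⁅b, ⁅a, x⁆⁆ := by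
  simp only [Ring.lie_def]
  noncomm_ring

variable {ι R : Type*} [Fintype ι] [Monoid R] [DistribMulAction R A]

theorem sum_sum_smul_sandwich_add_transpose (c : ι → ι → R) (u v : ι → A) (x : A) :
    ∑ i, ∑ j, c j i • (u i * ⁅x, v j⁆ + ⁅u i, x⁆ * v j)
      + ∑ i, ∑ j, c i j • (v i * ⁅x, u j⁆ + ⁅v i, x⁆ * u j)
      = ∑ i, ∑ j, c j i • (⁅u i, ⁅x, v j⁆⁆ + ⁅⁅u i, x⁆, v j⁆) := by
  rw [sum_comm (f := fun i j => c i j • (v i * ⁅x, u j⁆ + ⁅v i, x⁆ * u j)),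
    ← sum_add_distrib]
  refine sum_congr rfl fun i _ => ?_
  rw [← sum_add_distrib]
  refine sum_congr rfl fun j _ => ?_
  rw [← smul_add, mul_lie_add_lie_mul_add_swap]

theorem sum_sum_smul_sandwich_of_symm (c : ι → ι → R) (hc : ∀ i j, c i j = c j i)
    (a : ι → A) (x : A) :
    ∑ i, ∑ j, c i j • (a i * ⁅x, a j⁆ + ⁅a i, x⁆ * a j)
      = -∑ i, ∑ j, c i j • ⁅a j, ⁅a i, x⁆⁆ := by
  have reindex : ∑ i, ∑ j, c i j • (a i * ⁅x, a j⁆) = ∑ i, ∑ j, c i j • (a j * ⁅x, a i⁆) := by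
    rw [sum_comm]
    exact sum_congr rfl fun i _ => sum_congr rfl fun j _ => by rw [hc]
  simp only [smul_add, sum_add_distrib, reindex, ← sum_neg_distrib, ← smul_neg,
    ← mul_lie_swap_add_lie_mul]

theorem sum_sum_smul_sandwich_of_symm' (c : ι → ι → R) (hc : ∀ i j, c i j = c j i)
    (a : ι → A) (x : A) :
    ∑ i, ∑ j, c i j • (a i * ⁅x, a j⁆ + ⁅a i, x⁆ * a j)
      = -∑ i, ∑ j, c j i • ⁅⁅x, a i⁆, a j⁆ := by
  rw [sum_sum_smul_sandwich_of_symm c hc]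
  congr 1
  refine sum_congr rfl fun i _ => sum_congr rfl fun j _ => ?_
  rw [hc]
  congr 1
  simp only [Ring.lie_def]
  noncomm_ring

end Sandwich

theorem sum_sum_ite_add_smul {ι R M : Type*} [Fintype ι] [DecidableEq ι] [Semiring R]
    [AddCommMonoid M] [Module R M] (c : ι → ι → R) (f : ι → ι → M) :
    ∑ i, ∑ j, ((if i = j then 1 else 0) + c j i) • f i j
      = ∑ i, f i i + ∑ i, ∑ j, c j i • f i j := by
  simp [add_smul, sum_add_distrib, ite_smul]

theorem gaussian_lindbladian_eq_vacuum_plus_corrections_general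
    {𝓗 : Type*} [NormedAddCommGroup 𝓗] [InnerProductSpace ℂ 𝓗] [CompleteSpace 𝓗]
    {d : ℕ} (L : Fin d → 𝓗 →L[ℂ] 𝓗) (H : 𝓗 →L[ℂ] 𝓗)
    (n m : Matrix (Fin d) (Fin d) ℂ) (hm : ∀ i j, m i j = m j i)
    (𝓛 𝓛NM : (𝓗 →L[ℂ] 𝓗) → (𝓗 →L[ℂ] 𝓗))
    (h𝓛 : ∀ X, 𝓛 X = (1/2 : ℂ) • ∑ k, star (L k) * ⁅X, L k⁆
      + (1/2 : ℂ) • ∑ k, ⁅star (L k), X⁆ * L k - Complex.I • ⁅X, H⁆)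
    (h𝓛NM : ∀ X, 𝓛NM X =
      (1/2 : ℂ) • ∑ i, ∑ j, ((if i = j then 1 else 0) + n j i) •
          (star (L i) * ⁅X, L j⁆ + ⁅star (L i), X⁆ * L j)
      + (1/2 : ℂ) • ∑ i, ∑ j, n i j • (L i * ⁅X, star (L j)⁆ + ⁅L i, X⁆ * star (L j))
      - (1/2 : ℂ) • ∑ i, ∑ j, m i j •
          (star (L i) * ⁅X, star (L j)⁆ + ⁅star (L i), X⁆ * star (L j))
      - (1/2 : ℂ) • ∑ i, ∑ j, (starRingEnd ℂ (m j i)) • (L i * ⁅X, L j⁆ + ⁅L i, X⁆ * L j)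
      - Complex.I • ⁅X, H⁆) :
    ∀ X : 𝓗 →L[ℂ] 𝓗, 𝓛NM X = 𝓛 X
      + (1/2 : ℂ) • ∑ i, ∑ j, n j i • (⁅star (L i), ⁅X, L j⁆⁆ + ⁅⁅star (L i), X⁆, L j⁆)
      + (1/2 : ℂ) • ∑ i, ∑ j, m i j • ⁅star (L j), ⁅star (L i), X⁆⁆
      + (1/2 : ℂ) • ∑ i, ∑ j, (starRingEnd ℂ (m i j)) • ⁅⁅X, L i⁆, L j⁆ := by
  intro X
  have hm_conj : ∀ i j, starRingEnd ℂ (m j i) = starRingEnd ℂ (m i j) := fun i j => by rw [hm]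
  have hn := sum_sum_smul_sandwich_add_transpose n (fun i => star (L i)) L X
  have hm₁ := sum_sum_smul_sandwich_of_symm m hm (fun i => star (L i)) X
  have hm₂ := sum_sum_smul_sandwich_of_symm' (fun i j => starRingEnd ℂ (m j i)) hm_conj L X
  beta_reduce at hn hm₁ hm₂
  rw [h𝓛NM X, h𝓛 X, sum_sum_ite_add_smul (c := n), sum_add_distrib, hm₁, hm₂, ← hn]
  simp only [smul_add, smul_neg]
  abel

/-- **Representation-free form: the Gaussian Lindbladian versus the vacuum Lindbladian.**
For bounded couplings `L k`, bounded self-adjoint `H`, a matrix `n` and a symmetric matrix `m`,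
the Gaussian Lindblad generator `𝓛^{(N,M)}` equals the vacuum Lindblad generator `𝓛` plus the
double-commutator Wick–Stratonovich corrections
`½ Σ n_{ji} ([L_i*, [X, L_j]] + [[L_i*, X], L_j]) + ½ Σ m_{ij} [L_j*, [L_i*, X]]
+ ½ Σ conj(m_{ij}) [[X, L_i], L_j]`. -/
theorem gaussian_lindbladian_eq_vacuum_plus_corrections
    {𝓗 : Type*} [NormedAddCommGroup 𝓗] [InnerProductSpace ℂ 𝓗] [CompleteSpace 𝓗]
    {d : ℕ} (L : Fin d → 𝓗 →L[ℂ] 𝓗) (H : 𝓗 →L[ℂ] 𝓗) (hH : IsSelfAdjoint H)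
    (n m : Matrix (Fin d) (Fin d) ℂ) (hm : ∀ i j, m i j = m j i)
    (𝓛 𝓛NM : (𝓗 →L[ℂ] 𝓗) → (𝓗 →L[ℂ] 𝓗))
    (h𝓛 : ∀ X, 𝓛 X = (1/2 : ℂ) • ∑ k, star (L k) * ⁅X, L k⁆
      + (1/2 : ℂ) • ∑ k, ⁅star (L k), X⁆ * L k - Complex.I • ⁅X, H⁆)
    (h𝓛NM : ∀ X, 𝓛NM X =
      (1/2 : ℂ) • ∑ i, ∑ j, ((if i = j then 1 else 0) + n j i) •
          (star (L i) * ⁅X, L j⁆ + ⁅star (L i), X⁆ * L j)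
      + (1/2 : ℂ) • ∑ i, ∑ j, n i j • (L i * ⁅X, star (L j)⁆ + ⁅L i, X⁆ * star (L j))
      - (1/2 : ℂ) • ∑ i, ∑ j, m i j •
          (star (L i) * ⁅X, star (L j)⁆ + ⁅star (L i), X⁆ * star (L j))
      - (1/2 : ℂ) • ∑ i, ∑ j, (starRingEnd ℂ (m j i)) • (L i * ⁅X, L j⁆ + ⁅L i, X⁆ * L j)
      - Complex.I • ⁅X, H⁆) :
    ∀ X : 𝓗 →L[ℂ] 𝓗, 𝓛NM X = 𝓛 X
      + (1/2 : ℂ) • ∑ i, ∑ j, n j i • (⁅star (L i), ⁅X, L j⁆⁆ + ⁅⁅star (L i), X⁆, L j⁆)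
      + (1/2 : ℂ) • ∑ i, ∑ j, m i j • ⁅star (L j), ⁅star (L i), X⁆⁆
      + (1/2 : ℂ) • ∑ i, ∑ j, (starRingEnd ℂ (m i j)) • ⁅⁅X, L i⁆, L j⁆ :=
  gaussian_lindbladian_eq_vacuum_plus_corrections_general L H n m hm 𝓛 𝓛NM h𝓛 h𝓛NM
end

section
/- Let L_{A,1}, …, L_{A,d} and L_{B,1}, …, L_{B,d} be bounded operators and H_A, H_B bounded self-adjoint operators on a complex Hilbert space (no commutativity among any of these operators is assumed). Define 𝓛_S X = (1/2) Σ_k L_{S,k}*[X, L_{S,k}] + (1/2) Σ_k [L_{S,k}*, X] L_{S,k} − i[X, H_S] for S = A, B. Then for every bounded operator X: 𝓛_A X + 𝓛_B X + Σ_k L_{A,k}*[X, L_{B,k}] + Σ_k [L_{B,k}*, X] L_{A,k} = (1/2) Σ_k (L_{A,k} + L_{B,k})*[X, L_{A,k} + L_{B,k}] + (1/2) Σ_k [(L_{A,k} + L_{B,k})*, X](L_{A,k} + L_{B,k}) − i[X, H_A + H_B + Im{ Σ_k L_{B,k}* L_{A,k} }]. Hence two components (I, L_A, H_A) and (I, L_B,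 H_B) in series are equivalent to the single component (I, L_A + L_B, H_A + H_B + Im{L_B* L_A}). -/
/-!
The Lindbladian is quadratic in the coupling operators and linear in the Hamiltonian. Expanding
the dissipator of `a + b` yields the dissipators of `a` and `b` plus the symmetrised cross terms;
these differ from twice the series cross term `a*[X, b] + [b*, X] a` only by the commutator
`[X, C - C*]` with `C = b* a`, which is exactly what the Hamiltonian correction `Im C` cancels.
Nothing but the ring axioms and the involution is needed, so the identity holds in any
`*`-algebra over `ℂ`.
-/

/-- The "imaginary part" `Im{C} = (C − C*)/(2i)` of a bounded operator. -/
noncomputable def opIm {𝓗 : Type*} [NormedAddCommGroup 𝓗] [InnerProductSpace ℂ 𝓗]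
    [CompleteSpace 𝓗] (C : 𝓗 →L[ℂ] 𝓗) : 𝓗 →L[ℂ] 𝓗 :=
  (2 * Complex.I)⁻¹ • (C - star C)

open Complex

-- Twice the usual dissipator, so that it makes sense in any star ring.
def dissipator {R : Type*} [Ring R] [StarRing R] (L X : R) : R :=
  star L * ⁅X, L⁆ + ⁅star L, X⁆ * L

theorem dissipator_add {R : Type*} [Ring R] [StarRing R] (a b X : R) :
    dissipator (a + b) X
      = dissipator a X + dissipator b X + 2 • (star a * ⁅X, b⁆ + ⁅star b, X⁆ * a)
        + ⁅X, star b * a - star (star b * a)⁆ := by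
  simp only [dissipator, Ring.lie_def, star_add, star_mul, star_star]
  noncomm_ring

noncomputable def lindbladian {A : Type*} [Ring A] [StarRing A] [Algebra ℂ A]
    {ι : Type*} [Fintype ι] (L : ι → A) (H X : A) : A :=
  (1/2 : ℂ) • ∑ k, star (L k) * ⁅X, L k⁆ + (1/2 : ℂ) • ∑ k, ⁅star (L k), X⁆ * L k - I • ⁅X, H⁆

section SeriesProduct

-- Makes the Lie-bracket API (`lie_add`, `lie_smul`, `lie_sum`) apply to the ring commutator.
attribute [local instance] LieRing.ofAssociativeRing

theorem lindbladian_series {A : Type*} [Ring A] [StarRing A] [Algebra ℂ A]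
    {ι : Type*} [Fintype ι] (L M : ι → A) (H K X : A) :
    lindbladian L H X + lindbladian M K X
        + ∑ k, star (L k) * ⁅X, M k⁆ + ∑ k, ⁅star (M k), X⁆ * L k
      = lindbladian (L + M)
          (H + K + (2 * I)⁻¹ • (∑ k, star (M k) * L k - star (∑ k, star (M k) * L k))) X := by
  have hdiss := Finset.sum_congr rfl fun k (_ : k ∈ Finset.univ) => dissipator_add (L k) (M k) X
  simp only [dissipator, Finset.sum_add_distrib, Finset.sum_sub_distrib, ← Finset.smul_sum,
    ← lie_sum, ← star_sum] at hdiss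
  have hI : I * (2 * I)⁻¹ = 1 / 2 := by field_simp
  unfold lindbladian
  rw [lie_add, lie_add, lie_smul, smul_add, smul_add, smul_smul, hI]
  simp only [Pi.add_apply]
  linear_combination (norm := module) (-1/2 : ℂ) • hdiss

end SeriesProduct

theorem series_product_no_scattering_general
    {𝓗 : Type*} [NormedAddCommGroup 𝓗] [InnerProductSpace ℂ 𝓗] [CompleteSpace 𝓗]
    {d : ℕ} (LA LB : Fin d → 𝓗 →L[ℂ] 𝓗) (HA HB : 𝓗 →L[ℂ] 𝓗) :
    ∀ X : 𝓗 →L[ℂ] 𝓗,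
      ((1/2 : ℂ) • ∑ k, star (LA k) * ⁅X, LA k⁆
        + (1/2 : ℂ) • ∑ k, ⁅star (LA k), X⁆ * LA k - Complex.I • ⁅X, HA⁆)
      + ((1/2 : ℂ) • ∑ k, star (LB k) * ⁅X, LB k⁆
        + (1/2 : ℂ) • ∑ k, ⁅star (LB k), X⁆ * LB k - Complex.I • ⁅X, HB⁆)
      + ∑ k, star (LA k) * ⁅X, LB k⁆ + ∑ k, ⁅star (LB k), X⁆ * LA k
      = (1/2 : ℂ) • ∑ k, star (LA k + LB k) * ⁅X, LA k + LB k⁆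
        + (1/2 : ℂ) • ∑ k, ⁅star (LA k + LB k), X⁆ * (LA k + LB k)
        - Complex.I • ⁅X, HA + HB + opIm (∑ k, star (LB k) * LA k)⁆ :=
  lindbladian_series LA LB HA HB

/-- **The series product, no-scattering case.**
For components `(I, L_A, H_A)` and `(I, L_B, H_B)` (no commutativity assumed between any of the
operators), the open-loop Lindbladians plus the interconnection cross terms recombine into the
Lindbladian of the single component
`(I, L_A + L_B, H_A + H_B + Im{L_B* L_A})` given by the series product. -/
theorem series_product_no_scattering
    {𝓗 : Type*} [NormedAddCommGroup 𝓗] [InnerProductSpace ℂ 𝓗] [CompleteSpace 𝓗]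
    {d : ℕ} (LA LB : Fin d → 𝓗 →L[ℂ] 𝓗) (HA HB : 𝓗 →L[ℂ] 𝓗)
    (hHA : IsSelfAdjoint HA) (hHB : IsSelfAdjoint HB) :
    ∀ X : 𝓗 →L[ℂ] 𝓗,
      ((1/2 : ℂ) • ∑ k, star (LA k) * ⁅X, LA k⁆
        + (1/2 : ℂ) • ∑ k, ⁅star (LA k), X⁆ * LA k - Complex.I • ⁅X, HA⁆)
      + ((1/2 : ℂ) • ∑ k, star (LB k) * ⁅X, LB k⁆
        + (1/2 : ℂ) • ∑ k, ⁅star (LB k), X⁆ * LB k - Complex.I • ⁅X, HB⁆)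
      + ∑ k, star (LA k) * ⁅X, LB k⁆ + ∑ k, ⁅star (LB k), X⁆ * LA k
      = (1/2 : ℂ) • ∑ k, star (LA k + LB k) * ⁅X, LA k + LB k⁆
        + (1/2 : ℂ) • ∑ k, ⁅star (LA k + LB k), X⁆ * (LA k + LB k)
        - Complex.I • ⁅X, HA + HB + opIm (∑ k, star (LB k) * LA k)⁆ :=
  series_product_no_scattering_general LA LB HA HB
end

section
/- Let L_{A,1}, …, L_{A,d} and L_{B,1}, …, L_{B,d} be bounded operators on a complex Hilbert space and let n ≥ 0 be real. Then Im{ Σ_k ( (n+1) L_{B,k}* L_{A,k} + n L_{B,k} L_{A,k}* ) } = Im{ Σ_k L_{B,k}* L_{A,k} } + n · Im{ Σ_k [L_{B,k}*, L_{A,k}] }, where Im{C} = (C − C*)/(2i) and [A, B] = AB − BA. Consequently, naively applying the vacuum series product to the doubled (Araki–Woods) vacuum representation of a thermal field with mean photon number n, where the couplings L_S are replaced by the pairs (√(n+1) L_{S,k}, −√n L_{S,k}*), produces the Hamiltonian correction Im{L_B* L_A} + n Im{[L_B*, L_A]}, which carries a spurious state-dependent term n Im{[L_B*, L_A]} unless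 the coupling operators commute. -/
section OpIm

variable {𝓗 : Type*} [NormedAddCommGroup 𝓗] [InnerProductSpace ℂ 𝓗] [CompleteSpace 𝓗]

theorem opIm_add (C D : 𝓗 →L[ℂ] 𝓗) : opIm (C + D) = opIm C + opIm D := by
  simp only [opIm, star_add]
  module

theorem opIm_sub (C D : 𝓗 →L[ℂ] 𝓗) : opIm (C - D) = opIm C - opIm D := by
  simp only [opIm, star_sub]
  module

theorem opIm_sum {ι : Type*} (s : Finset ι) (C : ι → 𝓗 →L[ℂ] 𝓗) :
    opIm (∑ i ∈ s, C i) = ∑ i ∈ s, opIm (C i) := by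
  simp only [opIm, star_sum, ← Finset.sum_sub_distrib, Finset.smul_sum]

theorem opIm_ofReal_smul (r : ℝ) (C : 𝓗 →L[ℂ] 𝓗) : opIm ((r : ℂ) • C) = (r : ℂ) • opIm C := by
  simp only [opIm, star_smul, Complex.star_def, Complex.conj_ofReal]
  module

theorem opIm_star (C : 𝓗 →L[ℂ] 𝓗) : opIm (star C) = -opIm C := by
  simp only [opIm, star_star]
  module

theorem opIm_lie (A B : 𝓗 →L[ℂ] 𝓗) : opIm ⁅A, B⁆ = opIm (A * B) - opIm (B * A) := by
  rw [Ring.lie_def, opIm_sub]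

/-- The thermal term `n L_B L_A*` contributes `-n Im{L_A L_B*}`, which together with the extra
`n Im{L_B* L_A}` from the `(n + 1)` weight assembles into `n Im{[L_B*, L_A]}`. -/
theorem opIm_thermal_pair (A B : 𝓗 →L[ℂ] 𝓗) (n : ℝ) :
    opIm (((n : ℂ) + 1) • (star B * A) + (n : ℂ) • (B * star A))
      = opIm (star B * A) + (n : ℂ) • opIm ⁅star B, A⁆ := by
  have hweight : (n : ℂ) + 1 = ((n + 1 : ℝ) : ℂ) := by push_cast; rfl
  have hswap : opIm (B * star A) = -opIm (A * star B) := by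
    rw [← opIm_star, star_mul, star_star]
  rw [opIm_add, hweight, opIm_ofReal_smul, opIm_ofReal_smul, hswap, opIm_lie]
  push_cast
  module

end OpIm

theorem thermal_naive_series_spurious_term_general
    {𝓗 : Type*} [NormedAddCommGroup 𝓗] [InnerProductSpace ℂ 𝓗] [CompleteSpace 𝓗]
    {d : ℕ} (LA LB : Fin d → 𝓗 →L[ℂ] 𝓗) (n : ℝ) :
    opIm (∑ k, (((n : ℂ) + 1) • (star (LB k) * LA k) + (n : ℂ) • (LB k * star (LA k))))
      = opIm (∑ k, star (LB k) * LA k) + (n : ℂ) • opIm (∑ k, ⁅star (LB k), LA k⁆) := by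
  rw [opIm_sum, opIm_sum, opIm_sum, Finset.smul_sum, ← Finset.sum_add_distrib]
  exact Finset.sum_congr rfl fun k _ ↦ opIm_thermal_pair (LA k) (LB k) n

/-- **The spurious state-dependent term from naively cascading in the doubled representation.**
For mean photon number `n ≥ 0`, replacing the couplings `L_S` by the pairs
`(√(n+1) L_{S,k}, −√n L_{S,k}*)` in the vacuum series product produces the Hamiltonian
correction
`Im{ Σ_k ((n+1) L_{B,k}* L_{A,k} + n L_{B,k} L_{A,k}*) }
  = Im{ Σ_k L_{B,k}* L_{A,k} } + n · Im{ Σ_k [L_{B,k}*, L_{A,k}] }`,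
which carries the spurious state-dependent term `n Im{[L_B*, L_A]}` unless the coupling
operators commute. -/
theorem thermal_naive_series_spurious_term
    {𝓗 : Type*} [NormedAddCommGroup 𝓗] [InnerProductSpace ℂ 𝓗] [CompleteSpace 𝓗]
    {d : ℕ} (LA LB : Fin d → 𝓗 →L[ℂ] 𝓗) (n : ℝ) (hn : 0 ≤ n) :
    opIm (∑ k, (((n : ℂ) + 1) • (star (LB k) * LA k) + (n : ℂ) • (LB k * star (LA k))))
      = opIm (∑ k, star (LB k) * LA k) + (n : ℂ) • opIm (∑ k, ⁅star (LB k), LA k⁆) :=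
  thermal_naive_series_spurious_term_general LA LB n
end
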